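/- arXiv:1608.02223 — 7 statements merged into one kernel-verified Lean document; each statement's English description precedes it below -/
import Mathlib

section
/- Let V be a 6-dimensional vector space over an algebraically closed field, A: V -> V nilpotent with Jordan blocks of sizes 3,3, K_2 = ker(A), K_4 = ker(A^2). Then every complete flag (V_1, V_2, V_3, V_4, V_5) satisfying V_1 ⊆ K_2, K_4 ⊆ V_5, A^2(V_5) = V_1, A(V_4) = V_2, and V_2 ⊆ A(V_5) ⊆ V_4 is A-stable, i.e. A(V_i) ⊆ V_i for all i. -/
open Module

/-- Every complete flag `(V₁,…,V₅)` in a 6-dimensional space (with `A` nilpotent of Jordan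
type (3,3), `K₂ = ker A`, `K₄ = ker A²`) satisfying `V₁ ⊆ K₂`, `K₄ ⊆ V₅`, `A²(V₅) = V₁`,
`A(V₄) = V₂` and `V₂ ⊆ A(V₅) ⊆ V₄` is `A`-stable. -/
theorem stmt3 {k V : Type*} [Field k] [IsAlgClosed k] [AddCommGroup V] [Module k V]
    (hdim : finrank k V = 6) (A : V →ₗ[k] V) (h3 : A ^ 3 = 0)
    (hr1 : finrank k (LinearMap.range A) = 4)
    (hr2 : finrank k (LinearMap.range (A ^ 2)) = 2)
    (V1 V2 V3 V4 V5 : Submodule k V)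
    (h12 : V1 ≤ V2) (h23 : V2 ≤ V3) (h34 : V3 ≤ V4) (h45 : V4 ≤ V5)
    (hd1 : finrank k V1 = 1) (hd2 : finrank k V2 = 2) (hd3 : finrank k V3 = 3)
    (hd4 : finrank k V4 = 4) (hd5 : finrank k V5 = 5)
    (hK2 : V1 ≤ LinearMap.ker A) (hK4 : LinearMap.ker (A ^ 2) ≤ V5)
    (hA25 : Submodule.map (A ^ 2) V5 = V1) (hA4 : Submodule.map A V4 = V2)
    (h2A5 : V2 ≤ Submodule.map A V5) (hA54 : Submodule.map A V5 ≤ V4) :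
    Submodule.map A V1 ≤ V1 ∧ Submodule.map A V2 ≤ V2 ∧ Submodule.map A V3 ≤ V3 ∧
    Submodule.map A V4 ≤ V4 ∧ Submodule.map A V5 ≤ V5 := by
  have hAV2 : Submodule.map A V2 ≤ V1 := by
    calc Submodule.map A V2 ≤ Submodule.map A (Submodule.map A V5) :=
          Submodule.map_mono h2A5
      _ = Submodule.map (A ^ 2) V5 := by
          rw [← Submodule.map_comp, ← Module.End.mul_eq_comp, ← sq]
      _ = V1 := hA25
  refine ⟨?_, hAV2.trans h12, ?_, hA4.le.trans (h23.trans h34), hA54.trans h45⟩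
  · rintro x ⟨y, hy, rfl⟩
    have : A y = 0 := hK2 hy
    rw [this]
    exact V1.zero_mem
  · exact ((Submodule.map_mono h34).trans_eq hA4).trans h23
end

section
/- Let V be a 6-dimensional vector space over an algebraically closed field, A: V -> V nilpotent with Jordan blocks of sizes 3,3, K_2 = ker(A), K_4 = ker(A^2). Let (V_1, V_2, V_3, V_4, V_5) be a complete flag with V_1 ⊆ K_2, K_4 ⊆ V_5, A^2(V_5) = V_1, A(V_4) = V_2, V_2 ⊆ A(V_5) ⊆ V_4. Then A(V_5) ⊆ V_3 if and only if A(V_3) ⊆ V_1; moreover in this case A(V_5) = V_3. -/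
open Module

/-- For a complete flag as in the set-up of Lusztig 3.22–3.23 (A nilpotent of Jordan type
(3,3) on a 6-dimensional space): `A(V₅) ⊆ V₃` iff `A(V₃) ⊆ V₁`, and in this case
`A(V₅) = V₃`. -/
theorem stmt4 {k V : Type*} [Field k] [IsAlgClosed k] [AddCommGroup V] [Module k V]
    (hdim : finrank k V = 6) (A : V →ₗ[k] V) (h3 : A ^ 3 = 0)
    (hr1 : finrank k (LinearMap.range A) = 4)
    (hr2 : finrank k (LinearMap.range (A ^ 2)) = 2)
    (V1 V2 V3 V4 V5 : Submodule k V)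
    (h12 : V1 ≤ V2) (h23 : V2 ≤ V3) (h34 : V3 ≤ V4) (h45 : V4 ≤ V5)
    (hd1 : finrank k V1 = 1) (hd2 : finrank k V2 = 2) (hd3 : finrank k V3 = 3)
    (hd4 : finrank k V4 = 4) (hd5 : finrank k V5 = 5)
    (hK2 : V1 ≤ LinearMap.ker A) (hK4 : LinearMap.ker (A ^ 2) ≤ V5)
    (hA25 : Submodule.map (A ^ 2) V5 = V1) (hA4 : Submodule.map A V4 = V2)
    (h2A5 : V2 ≤ Submodule.map A V5) (hA54 : Submodule.map A V5 ≤ V4) :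
    (Submodule.map A V5 ≤ V3 ↔ Submodule.map A V3 ≤ V1) ∧
    (Submodule.map A V5 ≤ V3 → Submodule.map A V5 = V3) := by
  have hfin : FiniteDimensional k V :=
    Module.finite_of_finrank_pos (by rw [hdim]; norm_num)
  have hkerA : finrank k (LinearMap.ker A) = 2 := by
    have h := LinearMap.finrank_range_add_finrank_ker A
    rw [hr1, hdim] at h; omega
  have hker_le : LinearMap.ker A ≤ V5 := by
    refine le_trans ?_ hK4
    intro x hx
    simp only [LinearMap.mem_ker] at *
    rw [sq, Module.End.mul_apply, hx, map_zero]
  have hW3 : finrank k (Submodule.map A V5) = 3 := by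
    have h1 := LinearMap.finrank_range_add_finrank_ker (A.domRestrict V5)
    rw [LinearMap.range_domRestrict] at h1
    have h2 : finrank k (LinearMap.ker (A.domRestrict V5)) = finrank k (LinearMap.ker A) := by
      have e : LinearMap.ker (A.domRestrict V5) = (LinearMap.ker A).comap V5.subtype := by
        ext x; simp [LinearMap.mem_ker, LinearMap.domRestrict_apply]
      rw [e]
      exact LinearEquiv.finrank_eq (Submodule.comapSubtypeEquivOfLe hker_le)
    rw [h2, hkerA, hd5] at h1; omega
  have hAW : Submodule.map A (Submodule.map A V5) = V1 := by
    rw [← Submodule.map_comp, ← Module.End.mul_eq_comp, ← sq, hA25]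
  have fwd : Submodule.map A V5 ≤ V3 → Submodule.map A V5 = V3 := fun h =>
    Submodule.eq_of_le_of_finrank_le h (by rw [hd3, hW3])
  refine ⟨⟨fun h => ?_, fun h => ?_⟩, fwd⟩
  · rw [← fwd h, hAW]
  · by_contra hnot
    have hlt : Submodule.map A V5 ⊓ V3 < Submodule.map A V5 :=
      lt_of_le_of_ne inf_le_left (fun he => hnot (he ▸ inf_le_right))
    have hflt : finrank k ↥(Submodule.map A V5 ⊓ V3) < 3 := by
      rw [← hW3]; exact Submodule.finrank_lt_finrank_of_lt hlt
    have hsum := Submodule.finrank_sup_add_finrank_inf_eq (Submodule.map A V5) V3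
    rw [hW3, hd3] at hsum
    have hsup_le : Submodule.map A V5 ⊔ V3 ≤ V4 := sup_le hA54 h34
    have heq : Submodule.map A V5 ⊔ V3 = V4 :=
      Submodule.eq_of_le_of_finrank_le hsup_le (by rw [hd4]; omega)
    have : V2 ≤ V1 := by
      rw [← hA4, ← heq, Submodule.map_sup, hAW]
      exact sup_le le_rfl h
    have := Submodule.finrank_mono this
    rw [hd1, hd2] at this
    omega
end

section
/- Let V be a 6-dimensional vector space over an algebraically closed field, A nilpotent with Jordan blocks of sizes 3,3, K_2 = ker(A), K_4 = ker(A^2). Let (V_1, V_2, V_3, V_4, V_5) be a complete flag with V_1 ⊆ K_2, K_4 ⊆ V_5, A^2(V_5) = V_1, A(V_4) = V_2, V_2 ⊆ A(V_5) ⊆ V_4. Then V_4 = K_4 if and only if V_2 = K_2. -/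
open Module

/-- For a complete flag as in the set-up of Lusztig 3.22–3.23 (A nilpotent of Jordan type
(3,3) on a 6-dimensional space): `V₄ = ker A²` iff `V₂ = ker A`. -/
theorem stmt5 {k V : Type*} [Field k] [IsAlgClosed k] [AddCommGroup V] [Module k V]
    (hdim : finrank k V = 6) (A : V →ₗ[k] V) (h3 : A ^ 3 = 0)
    (hr1 : finrank k (LinearMap.range A) = 4)
    (hr2 : finrank k (LinearMap.range (A ^ 2)) = 2)
    (V1 V2 V3 V4 V5 : Submodule k V)
    (h12 : V1 ≤ V2) (h23 : V2 ≤ V3) (h34 : V3 ≤ V4) (h45 : V4 ≤ V5)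
    (hd1 : finrank k V1 = 1) (hd2 : finrank k V2 = 2) (hd3 : finrank k V3 = 3)
    (hd4 : finrank k V4 = 4) (hd5 : finrank k V5 = 5)
    (hK2 : V1 ≤ LinearMap.ker A) (hK4 : LinearMap.ker (A ^ 2) ≤ V5)
    (hA25 : Submodule.map (A ^ 2) V5 = V1) (hA4 : Submodule.map A V4 = V2)
    (h2A5 : V2 ≤ Submodule.map A V5) (hA54 : Submodule.map A V5 ≤ V4) :
    V4 = LinearMap.ker (A ^ 2) ↔ V2 = LinearMap.ker A := by
  have hfd : FiniteDimensional k V := FiniteDimensional.of_finrank_pos (by omega)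
  have hrn1 := LinearMap.finrank_range_add_finrank_ker A
  have hrn2 := LinearMap.finrank_range_add_finrank_ker (A ^ 2)
  rw [hdim] at hrn1 hrn2
  have hkerA : LinearMap.ker A = LinearMap.range (A ^ 2) := by
    refine (Submodule.eq_of_le_of_finrank_eq ?_ ?_).symm
    · rintro _ ⟨x, rfl⟩
      simp only [LinearMap.mem_ker, ← Module.End.mul_apply, ← pow_succ']
      rw [h3]; rfl
    · omega
  have hkerA2 : LinearMap.ker (A ^ 2) = LinearMap.range A := by
    refine (Submodule.eq_of_le_of_finrank_eq ?_ ?_).symm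
    · rintro _ ⟨x, rfl⟩
      simp only [LinearMap.mem_ker, ← Module.End.mul_apply, ← pow_succ]
      rw [h3]; rfl
    · omega
  constructor
  · intro h4
    rw [hA4.symm, h4, hkerA2, hkerA]
    have : Submodule.map A (LinearMap.range A) = LinearMap.range (A ∘ₗ A) :=
      (LinearMap.range_comp A A).symm
    rw [this, pow_two]; rfl
  · intro h2
    apply Submodule.eq_of_le_of_finrank_eq
    · intro x hx
      have hAx : A x ∈ LinearMap.ker A := by
        rw [← h2, ← hA4]; exact ⟨x, hx, rfl⟩
      simpa [LinearMap.mem_ker, pow_two, Module.End.mul_apply] using hAx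
    · rw [hd4]; omega
end

section
/- Let V be an 8-dimensional vector space over an algebraically closed field k with a nondegenerate quadratic form Q, and basis e_0,e_1,e_2,e_3,e_0',e_1',e_2',e_3' with Q(e_i)=Q(e_i')=0, (e_i,e_j)=(e_i',e_j')=0 for all i,j, (e_i,e_j')=1 if i≠j are both odd or i=j are both even, and (e_i,e_j')=0 otherwise. Let A be the nilpotent endomorphism with A e_0 = A e_0' = 0, A e_1 = e_2 + x e_3, A e_2 = e_3, A e_3 = 0, A e_1' = -e_2' + x' e_3', A e_2' = -e_3', A e_3' = 0, where x + x' = 1. Set I_2 = A^2(V) = span(e_3, e_3'). Then there are exactly two totally isotropic 4-dimensional subspaces V_4 of V in the SO(Q)-orbit of span(e_3,e_3',e_0,e_2) such that I_2 ⊆ V_4 and dim A(V_4) ≤ 1, namely span(e_3,e_3',e_0,e_2) and span(e_3,e_3',e_0',e_2'). -/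
/-- Standard basis of `k⁸`; indices `0,1,2,3` are `e₀,e₁,e₂,e₃` and `4,5,6,7` are
`e₀',e₁',e₂',e₃'`. -/
def e8 (k : Type*) [Field k] : Fin 8 → (Fin 8 → k) := fun i => Pi.single i 1

/-- Gram matrix of the symmetric bilinear form associated to `Q`:
`(eᵢ,eⱼ) = (eᵢ',eⱼ') = 0`, `(eᵢ,eⱼ') = 1` iff `i ≠ j` both odd or `i = j` both even. -/
def gram8 (k : Type*) [Field k] : Matrix (Fin 8) (Fin 8) k :=
  !![0,0,0,0, 1,0,0,0;
     0,0,0,0, 0,0,0,1;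
     0,0,0,0, 0,0,1,0;
     0,0,0,0, 0,1,0,0;
     1,0,0,0, 0,0,0,0;
     0,0,0,1, 0,0,0,0;
     0,0,1,0, 0,0,0,0;
     0,1,0,0, 0,0,0,0]

section Aux
variable {k : Type*} [Field k]

theorem e8_apply (i j : Fin 8) : e8 k i j = if j = i then 1 else 0 := Pi.single_apply i 1 j

theorem e8_decomp' (v : Fin 8 → k) :
    v = ((v 0 • e8 k 0 + v 1 • e8 k 1) + (v 2 • e8 k 2 + v 3 • e8 k 3)) +
        ((v 4 • e8 k 4 + v 5 • e8 k 5) + (v 6 • e8 k 6 + v 7 • e8 k 7)) := by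
  funext j; fin_cases j <;> simp [e8]

theorem Qadd (Q : QuadraticForm k (Fin 8 → k)) (a b : Fin 8 → k) :
    Q (a + b) = Q a + Q b + QuadraticMap.polar Q a b := by
  simp [QuadraticMap.polar]

theorem coord_of_mem_span {s : Set (Fin 8 → k)} {j : Fin 8} (h : ∀ u ∈ s, u j = 0)
    {v : Fin 8 → k} (hv : v ∈ Submodule.span k s) : v j = 0 :=
  Submodule.span_le.mpr
    (fun u hu => (LinearMap.mem_ker (f := LinearMap.proj (R := k) (φ := fun _ : Fin 8 => k) j)).mpr
      (h u hu)) hv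

theorem finrank_span_e8 {m : ℕ} (f : Fin m → Fin 8) (hf : Function.Injective f) :
    Module.finrank k (Submodule.span k (Set.range fun i => e8 k (f i))) = m := by
  have hli : LinearIndependent k (fun i => e8 k (f i)) := by
    have := (Pi.basisFun k (Fin 8)).linearIndependent.comp f hf
    convert this using 1
    funext i
    simp [e8, Pi.basisFun_apply]
  rw [finrank_span_eq_card hli, Fintype.card_fin]

theorem finrank_span_e8_pair {a b : Fin 8} (h : a ≠ b) :
    Module.finrank k (Submodule.span k {e8 k a, e8 k b}) = 2 := by
  have h1 : (fun i => e8 k (![a, b] i)) = ![e8 k a, e8 k b] := by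
    funext i; fin_cases i <;> rfl
  have h2 : (Set.range fun i => e8 k (![a, b] i)) = {e8 k a, e8 k b} := by
    rw [h1]; simp only [Matrix.range_cons, Matrix.range_empty, Set.union_empty, Set.singleton_union]
  rw [← h2, finrank_span_e8 _ (by
    intro i j hij
    fin_cases i <;> fin_cases j <;> simp_all)]

theorem finrank_span_e8_triple {a b c : Fin 8} (hab : a ≠ b) (hac : a ≠ c) (hbc : b ≠ c) :
    Module.finrank k (Submodule.span k {e8 k a, e8 k b, e8 k c}) = 3 := by
  have h1 : (fun i => e8 k (![a, b, c] i)) = ![e8 k a, e8 k b, e8 k c] := by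
    funext i; fin_cases i <;> rfl
  have h2 : (Set.range fun i => e8 k (![a, b, c] i)) = {e8 k a, e8 k b, e8 k c} := by
    rw [h1]; simp only [Matrix.range_cons, Matrix.range_empty, Set.union_empty, Set.singleton_union]
  rw [← h2, finrank_span_e8 _ (by
    intro i j hij
    fin_cases i <;> fin_cases j <;> simp_all)]

theorem finrank_span_e8_quad {a b c d : Fin 8} (hab : a ≠ b) (hac : a ≠ c) (had : a ≠ d)
    (hbc : b ≠ c) (hbd : b ≠ d) (hcd : c ≠ d) :
    Module.finrank k (Submodule.span k {e8 k a, e8 k b, e8 k c, e8 k d}) = 4 := by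
  have h1 : (fun i => e8 k (![a, b, c, d] i)) = ![e8 k a, e8 k b, e8 k c, e8 k d] := by
    funext i; fin_cases i <;> rfl
  have h2 : (Set.range fun i => e8 k (![a, b, c, d] i)) = {e8 k a, e8 k b, e8 k c, e8 k d} := by
    rw [h1]; simp only [Matrix.range_cons, Matrix.range_empty, Set.union_empty, Set.singleton_union]
  rw [← h2, finrank_span_e8 _ (by
    intro i j hij
    fin_cases i <;> fin_cases j <;> simp_all)]

theorem mem_span_pair {a b : Fin 8} {v : Fin 8 → k} (h : v = v a • e8 k a + v b • e8 k b) :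
    v ∈ Submodule.span k {e8 k a, e8 k b} := by
  rw [h]
  exact add_mem (Submodule.smul_mem _ _ (Submodule.subset_span (by simp)))
    (Submodule.smul_mem _ _ (Submodule.subset_span (by simp)))

theorem mem_span_triple {a b c : Fin 8} {v : Fin 8 → k}
    (h : v = v a • e8 k a + v b • e8 k b + v c • e8 k c) :
    v ∈ Submodule.span k {e8 k a, e8 k b, e8 k c} := by
  rw [h]
  exact add_mem (add_mem (Submodule.smul_mem _ _ (Submodule.subset_span (by simp)))
    (Submodule.smul_mem _ _ (Submodule.subset_span (by simp))))
    (Submodule.smul_mem _ _ (Submodule.subset_span (by simp)))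

theorem mem_span_quad {a b c d : Fin 8} {v : Fin 8 → k}
    (h : v = v a • e8 k a + v b • e8 k b + v c • e8 k c + v d • e8 k d) :
    v ∈ Submodule.span k {e8 k a, e8 k b, e8 k c, e8 k d} := by
  rw [h]
  exact add_mem (add_mem (add_mem (Submodule.smul_mem _ _ (Submodule.subset_span (by simp)))
    (Submodule.smul_mem _ _ (Submodule.subset_span (by simp))))
    (Submodule.smul_mem _ _ (Submodule.subset_span (by simp))))
    (Submodule.smul_mem _ _ (Submodule.subset_span (by simp)))

end Aux

section QP
variable {k : Type*} [Field k] (Q : QuadraticForm k (Fin 8 → k))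
    (hQ0 : ∀ i, Q (e8 k i) = 0)
    (hQpolar : ∀ i j, QuadraticMap.polar Q (e8 k i) (e8 k j) = gram8 k i j)

set_option maxHeartbeats 2000000 in
include hQ0 hQpolar in
theorem Qval (v : Fin 8 → k) : Q v = v 0 * v 4 + v 1 * v 7 + v 2 * v 6 + v 3 * v 5 := by
  have hp00 : QuadraticMap.polar Q (e8 k 0) (e8 k 0) = 0 := (hQpolar 0 0).trans rfl
  have hp01 : QuadraticMap.polar Q (e8 k 0) (e8 k 1) = 0 := (hQpolar 0 1).trans rfl
  have hp02 : QuadraticMap.polar Q (e8 k 0) (e8 k 2) = 0 := (hQpolar 0 2).trans rfl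
  have hp03 : QuadraticMap.polar Q (e8 k 0) (e8 k 3) = 0 := (hQpolar 0 3).trans rfl
  have hp04 : QuadraticMap.polar Q (e8 k 0) (e8 k 4) = 1 := (hQpolar 0 4).trans rfl
  have hp05 : QuadraticMap.polar Q (e8 k 0) (e8 k 5) = 0 := (hQpolar 0 5).trans rfl
  have hp06 : QuadraticMap.polar Q (e8 k 0) (e8 k 6) = 0 := (hQpolar 0 6).trans rfl
  have hp07 : QuadraticMap.polar Q (e8 k 0) (e8 k 7) = 0 := (hQpolar 0 7).trans rfl
  have hp10 : QuadraticMap.polar Q (e8 k 1) (e8 k 0) = 0 := (hQpolar 1 0).trans rfl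
  have hp11 : QuadraticMap.polar Q (e8 k 1) (e8 k 1) = 0 := (hQpolar 1 1).trans rfl
  have hp12 : QuadraticMap.polar Q (e8 k 1) (e8 k 2) = 0 := (hQpolar 1 2).trans rfl
  have hp13 : QuadraticMap.polar Q (e8 k 1) (e8 k 3) = 0 := (hQpolar 1 3).trans rfl
  have hp14 : QuadraticMap.polar Q (e8 k 1) (e8 k 4) = 0 := (hQpolar 1 4).trans rfl
  have hp15 : QuadraticMap.polar Q (e8 k 1) (e8 k 5) = 0 := (hQpolar 1 5).trans rfl
  have hp16 : QuadraticMap.polar Q (e8 k 1) (e8 k 6) = 0 := (hQpolar 1 6).trans rfl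
  have hp17 : QuadraticMap.polar Q (e8 k 1) (e8 k 7) = 1 := (hQpolar 1 7).trans rfl
  have hp20 : QuadraticMap.polar Q (e8 k 2) (e8 k 0) = 0 := (hQpolar 2 0).trans rfl
  have hp21 : QuadraticMap.polar Q (e8 k 2) (e8 k 1) = 0 := (hQpolar 2 1).trans rfl
  have hp22 : QuadraticMap.polar Q (e8 k 2) (e8 k 2) = 0 := (hQpolar 2 2).trans rfl
  have hp23 : QuadraticMap.polar Q (e8 k 2) (e8 k 3) = 0 := (hQpolar 2 3).trans rfl
  have hp24 : QuadraticMap.polar Q (e8 k 2) (e8 k 4) = 0 := (hQpolar 2 4).trans rfl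
  have hp25 : QuadraticMap.polar Q (e8 k 2) (e8 k 5) = 0 := (hQpolar 2 5).trans rfl
  have hp26 : QuadraticMap.polar Q (e8 k 2) (e8 k 6) = 1 := (hQpolar 2 6).trans rfl
  have hp27 : QuadraticMap.polar Q (e8 k 2) (e8 k 7) = 0 := (hQpolar 2 7).trans rfl
  have hp30 : QuadraticMap.polar Q (e8 k 3) (e8 k 0) = 0 := (hQpolar 3 0).trans rfl
  have hp31 : QuadraticMap.polar Q (e8 k 3) (e8 k 1) = 0 := (hQpolar 3 1).trans rfl
  have hp32 : QuadraticMap.polar Q (e8 k 3) (e8 k 2) = 0 := (hQpolar 3 2).trans rfl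
  have hp33 : QuadraticMap.polar Q (e8 k 3) (e8 k 3) = 0 := (hQpolar 3 3).trans rfl
  have hp34 : QuadraticMap.polar Q (e8 k 3) (e8 k 4) = 0 := (hQpolar 3 4).trans rfl
  have hp35 : QuadraticMap.polar Q (e8 k 3) (e8 k 5) = 1 := (hQpolar 3 5).trans rfl
  have hp36 : QuadraticMap.polar Q (e8 k 3) (e8 k 6) = 0 := (hQpolar 3 6).trans rfl
  have hp37 : QuadraticMap.polar Q (e8 k 3) (e8 k 7) = 0 := (hQpolar 3 7).trans rfl
  have hp40 : QuadraticMap.polar Q (e8 k 4) (e8 k 0) = 1 := (hQpolar 4 0).trans rfl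
  have hp41 : QuadraticMap.polar Q (e8 k 4) (e8 k 1) = 0 := (hQpolar 4 1).trans rfl
  have hp42 : QuadraticMap.polar Q (e8 k 4) (e8 k 2) = 0 := (hQpolar 4 2).trans rfl
  have hp43 : QuadraticMap.polar Q (e8 k 4) (e8 k 3) = 0 := (hQpolar 4 3).trans rfl
  have hp44 : QuadraticMap.polar Q (e8 k 4) (e8 k 4) = 0 := (hQpolar 4 4).trans rfl
  have hp45 : QuadraticMap.polar Q (e8 k 4) (e8 k 5) = 0 := (hQpolar 4 5).trans rfl
  have hp46 : QuadraticMap.polar Q (e8 k 4) (e8 k 6) = 0 := (hQpolar 4 6).trans rfl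
  have hp47 : QuadraticMap.polar Q (e8 k 4) (e8 k 7) = 0 := (hQpolar 4 7).trans rfl
  have hp50 : QuadraticMap.polar Q (e8 k 5) (e8 k 0) = 0 := (hQpolar 5 0).trans rfl
  have hp51 : QuadraticMap.polar Q (e8 k 5) (e8 k 1) = 0 := (hQpolar 5 1).trans rfl
  have hp52 : QuadraticMap.polar Q (e8 k 5) (e8 k 2) = 0 := (hQpolar 5 2).trans rfl
  have hp53 : QuadraticMap.polar Q (e8 k 5) (e8 k 3) = 1 := (hQpolar 5 3).trans rfl
  have hp54 : QuadraticMap.polar Q (e8 k 5) (e8 k 4) = 0 := (hQpolar 5 4).trans rfl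
  have hp55 : QuadraticMap.polar Q (e8 k 5) (e8 k 5) = 0 := (hQpolar 5 5).trans rfl
  have hp56 : QuadraticMap.polar Q (e8 k 5) (e8 k 6) = 0 := (hQpolar 5 6).trans rfl
  have hp57 : QuadraticMap.polar Q (e8 k 5) (e8 k 7) = 0 := (hQpolar 5 7).trans rfl
  have hp60 : QuadraticMap.polar Q (e8 k 6) (e8 k 0) = 0 := (hQpolar 6 0).trans rfl
  have hp61 : QuadraticMap.polar Q (e8 k 6) (e8 k 1) = 0 := (hQpolar 6 1).trans rfl
  have hp62 : QuadraticMap.polar Q (e8 k 6) (e8 k 2) = 1 := (hQpolar 6 2).trans rfl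
  have hp63 : QuadraticMap.polar Q (e8 k 6) (e8 k 3) = 0 := (hQpolar 6 3).trans rfl
  have hp64 : QuadraticMap.polar Q (e8 k 6) (e8 k 4) = 0 := (hQpolar 6 4).trans rfl
  have hp65 : QuadraticMap.polar Q (e8 k 6) (e8 k 5) = 0 := (hQpolar 6 5).trans rfl
  have hp66 : QuadraticMap.polar Q (e8 k 6) (e8 k 6) = 0 := (hQpolar 6 6).trans rfl
  have hp67 : QuadraticMap.polar Q (e8 k 6) (e8 k 7) = 0 := (hQpolar 6 7).trans rfl
  have hp70 : QuadraticMap.polar Q (e8 k 7) (e8 k 0) = 0 := (hQpolar 7 0).trans rfl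
  have hp71 : QuadraticMap.polar Q (e8 k 7) (e8 k 1) = 1 := (hQpolar 7 1).trans rfl
  have hp72 : QuadraticMap.polar Q (e8 k 7) (e8 k 2) = 0 := (hQpolar 7 2).trans rfl
  have hp73 : QuadraticMap.polar Q (e8 k 7) (e8 k 3) = 0 := (hQpolar 7 3).trans rfl
  have hp74 : QuadraticMap.polar Q (e8 k 7) (e8 k 4) = 0 := (hQpolar 7 4).trans rfl
  have hp75 : QuadraticMap.polar Q (e8 k 7) (e8 k 5) = 0 := (hQpolar 7 5).trans rfl
  have hp76 : QuadraticMap.polar Q (e8 k 7) (e8 k 6) = 0 := (hQpolar 7 6).trans rfl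
  have hp77 : QuadraticMap.polar Q (e8 k 7) (e8 k 7) = 0 := (hQpolar 7 7).trans rfl
  conv_lhs => rw [e8_decomp' v]
  rw [Qadd, Qadd, Qadd, Qadd, Qadd, Qadd, Qadd]
  simp only [QuadraticMap.polar_add_left, QuadraticMap.polar_add_right,
    QuadraticMap.polar_smul_left, QuadraticMap.polar_smul_right, QuadraticMap.map_smul,
    hQ0, hp00, hp01, hp02, hp03, hp04, hp05, hp06, hp07, hp10, hp11, hp12, hp13, hp14, hp15, hp16, hp17, hp20, hp21, hp22, hp23, hp24, hp25, hp26, hp27, hp30, hp31, hp32, hp33, hp34, hp35, hp36, hp37, hp40, hp41, hp42, hp43, hp44, hp45, hp46, hp47, hp50, hp51, hp52, hp53, hp54, hp55, hp56, hp57, hp60, hp61, hp62, hp63, hp64, hp65, hp66, hp67, hp70, hp71, hp72, hp73, hp74, hp75, hp76, hp77, smul_eq_mul, smul_zero]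
  ring

include hQ0 hQpolar in
theorem Pval (u v : Fin 8 → k) : QuadraticMap.polar Q u v =
    u 0 * v 4 + u 4 * v 0 + u 1 * v 7 + u 7 * v 1 + u 2 * v 6 + u 6 * v 2 +
    u 3 * v 5 + u 5 * v 3 := by
  simp only [QuadraticMap.polar, Qval Q hQ0 hQpolar, Pi.add_apply]
  ring

end QP

/-- In the 8-dimensional quadratic space of Lusztig §3.2, with the nilpotent `A` of
Jordan type (3,3,1,1) and `I₂ = A²(V) = span(e₃,e₃')`, there are exactly two totally
isotropic 4-dimensional subspaces `V₄` in the family (SO(Q)-orbit) of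
`span(e₃,e₃',e₀,e₂)` — membership in the family being expressed by
`dim(V₄ ∩ span(e₃,e₃',e₀,e₂))` even — with `I₂ ⊆ V₄` and `dim A(V₄) ≤ 1`, namely
`span(e₃,e₃',e₀,e₂)` and `span(e₃,e₃',e₀',e₂')`. -/
theorem stmt13 {k : Type*} [Field k] [IsAlgClosed k]
    (Q : QuadraticForm k (Fin 8 → k))
    (hQ0 : ∀ i, Q (e8 k i) = 0)
    (hQpolar : ∀ i j, QuadraticMap.polar Q (e8 k i) (e8 k j) = gram8 k i j)
    (A : (Fin 8 → k) →ₗ[k] (Fin 8 → k)) (x x' : k) (hx : x + x' = 1)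
    (hA0 : A (e8 k 0) = 0) (hA0' : A (e8 k 4) = 0)
    (hA1 : A (e8 k 1) = e8 k 2 + x • e8 k 3) (hA2 : A (e8 k 2) = e8 k 3)
    (hA3 : A (e8 k 3) = 0)
    (hA1' : A (e8 k 5) = -e8 k 6 + x' • e8 k 7) (hA2' : A (e8 k 6) = -e8 k 7)
    (hA3' : A (e8 k 7) = 0) :
    {V4 : Submodule k (Fin 8 → k) |
        Module.finrank k V4 = 4 ∧ (∀ v ∈ V4, Q v = 0) ∧
        Submodule.span k {e8 k 3, e8 k 7} ≤ V4 ∧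
        Module.finrank k (Submodule.map A V4) ≤ 1 ∧
        Even (Module.finrank k
          ↥(V4 ⊓ Submodule.span k {e8 k 3, e8 k 7, e8 k 0, e8 k 2}))} =
      {Submodule.span k {e8 k 3, e8 k 7, e8 k 0, e8 k 2},
       Submodule.span k {e8 k 3, e8 k 7, e8 k 4, e8 k 6}} := by
  classical
  ext V4
  simp only [Set.mem_setOf_eq, Set.mem_insert_iff, Set.mem_singleton_iff]
  constructor
  · rintro ⟨h4, hiso, hI2, hrank, heven⟩
    have he3 : e8 k 3 ∈ V4 := hI2 (Submodule.subset_span (by simp))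
    have he7 : e8 k 7 ∈ V4 := hI2 (Submodule.subset_span (by simp))
    have h15 : ∀ v ∈ V4, v 1 = 0 ∧ v 5 = 0 := by
      intro v hv
      have hp3 : QuadraticMap.polar Q (e8 k 3) v = 0 := by
        simp [QuadraticMap.polar, hiso _ (add_mem he3 hv), hQ0 3, hiso v hv]
      have hp7 : QuadraticMap.polar Q (e8 k 7) v = 0 := by
        simp [QuadraticMap.polar, hiso _ (add_mem he7 hv), hQ0 7, hiso v hv]
      rw [Pval Q hQ0 hQpolar] at hp3 hp7
      constructor
      · simpa [e8_apply] using hp7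
      · simpa [e8_apply] using hp3
    have hAv : ∀ v ∈ V4, A v = v 2 • e8 k 3 - v 6 • e8 k 7 := by
      intro v hv
      obtain ⟨h1, h5⟩ := h15 v hv
      have hv' : v = v 0 • e8 k 0 + v 2 • e8 k 2 + v 3 • e8 k 3 +
          (v 4 • e8 k 4 + v 6 • e8 k 6 + v 7 • e8 k 7) := by
        funext j; fin_cases j <;> simp [e8_apply, h1, h5]
      conv_lhs => rw [hv']
      simp only [map_add, map_smul, hA0, hA2, hA3, hA0', hA2', hA3', smul_zero, add_zero,
        zero_add, smul_neg]
      abel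
    have hQv : ∀ v ∈ V4, v 0 * v 4 + v 2 * v 6 = 0 := by
      intro v hv
      obtain ⟨h1, h5⟩ := h15 v hv
      have hq := hiso v hv
      rw [Qval Q hQ0 hQpolar] at hq
      linear_combination hq - v 7 * h1 - v 3 * h5
    have hPolv : ∀ u ∈ V4, ∀ v ∈ V4, u 0 * v 4 + u 4 * v 0 + u 2 * v 6 + u 6 * v 2 = 0 := by
      intro u hu v hv
      obtain ⟨hu1, hu5⟩ := h15 u hu
      obtain ⟨hv1, hv5⟩ := h15 v hv
      have hp : QuadraticMap.polar Q u v = 0 := by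
        simp [QuadraticMap.polar, hiso _ (add_mem hu hv), hiso u hu, hiso v hv]
      rw [Pval Q hQ0 hQpolar] at hp
      linear_combination hp - v 7 * hu1 - v 3 * hu5 - u 7 * hv1 - u 3 * hv5
    have hA0coord : ∀ w ∈ V4, A w = 0 → w 2 = 0 ∧ w 6 = 0 := by
      intro w hwV hwA
      have h := hAv w hwV
      rw [hwA] at h
      have h3 := congrFun h 3
      have h7 := congrFun h 7
      simp [e8_apply] at h3 h7
      exact ⟨h3.symm, h7⟩
    have hrn := LinearMap.finrank_range_add_finrank_ker (A.domRestrict V4)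
    rw [LinearMap.range_domRestrict] at hrn
    have hKmem : ∀ w ∈ Submodule.map V4.subtype (LinearMap.ker (A.domRestrict V4)),
        w ∈ V4 ∧ A w = 0 := by
      rintro w ⟨⟨y, hy⟩, hyk, rfl⟩
      exact ⟨hy, hyk⟩
    have hw : ∃ w ∈ V4, A w = 0 ∧ ¬(w 0 = 0 ∧ w 4 = 0) := by
      by_contra hcon
      push_neg at hcon
      have hKle2 : Submodule.map V4.subtype (LinearMap.ker (A.domRestrict V4)) ≤
          Submodule.span k {e8 k 3, e8 k 7} := by
        intro w hwK
        obtain ⟨hwV, hwA⟩ := hKmem w hwK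
        obtain ⟨h1, h5⟩ := h15 w hwV
        obtain ⟨h0, hh4⟩ := hcon w hwV hwA
        obtain ⟨h2, h6⟩ := hA0coord w hwV hwA
        exact mem_span_pair (by funext j; fin_cases j <;> simp [e8_apply, h0, h1, h2, hh4, h5, h6])
      have hmono := Submodule.finrank_mono hKle2
      rw [finrank_span_e8_pair (by decide), Submodule.finrank_map_subtype_eq] at hmono
      omega
    obtain ⟨w, hwV, hwA, hw04⟩ := hw
    obtain ⟨hw2, hw6⟩ := hA0coord w hwV hwA
    have hQw := hQv w hwV
    have hC1 : (∀ v ∈ V4, v 6 = 0) ∨ (∀ v ∈ V4, v 2 = 0) := by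
      by_contra hcon
      push_neg at hcon
      obtain ⟨⟨u, hu, hu6⟩, ⟨z, hz, hz2⟩⟩ := hcon
      by_cases hd : u 2 * z 6 - u 6 * z 2 = 0
      · have hu2 : u 2 ≠ 0 := by
          intro h0
          have h' : u 6 * z 2 = 0 := by linear_combination -hd + z 6 * h0
          rcases mul_eq_zero.mp h' with h | h
          · exact hu6 h
          · exact hz2 h
        have hu0u4 : u 0 * u 4 = -(u 2 * u 6) := by linear_combination hQv u hu
        have hu0 : u 0 ≠ 0 := by
          intro h0
          exact mul_ne_zero hu2 hu6 (by linear_combination hu0u4 - u 4 * h0)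
        have hu4 : u 4 ≠ 0 := by
          intro h0
          exact mul_ne_zero hu2 hu6 (by linear_combination hu0u4 - u 0 * h0)
        have hpol := hPolv w hwV u hu
        rcases not_and_or.mp hw04 with h0 | hh4
        · have hw4 : w 4 = 0 := by
            rcases mul_eq_zero.mp (show w 0 * w 4 = 0 by
              linear_combination hQw - w 6 * hw2) with h | h
            · exact absurd h h0
            · exact h
          rcases mul_eq_zero.mp (show w 0 * u 4 = 0 by
            linear_combination hpol - u 0 * hw4 - u 6 * hw2 - u 2 * hw6) with h | h
          · exact absurd h h0
          · exact hu4 h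
        · have hw0 : w 0 = 0 := by
            rcases mul_eq_zero.mp (show w 0 * w 4 = 0 by
              linear_combination hQw - w 6 * hw2) with h | h
            · exact h
            · exact absurd h hh4
          rcases mul_eq_zero.mp (show w 4 * u 0 = 0 by
            linear_combination hpol - u 4 * hw0 - u 6 * hw2 - u 2 * hw6) with h | h
          · exact absurd h hh4
          · exact hu0 h
      · have hAu := hAv u hu
        have hAz := hAv z hz
        have hli : LinearIndependent k ![A u, A z] := by
          rw [LinearIndependent.pair_iff]
          intro s t hst
          rw [hAu, hAz] at hst
          have h3 := congrFun hst 3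
          have h7 := congrFun hst 7
          simp [e8_apply] at h3 h7
          have hs : s = 0 := by
            rcases mul_eq_zero.mp (show s * (u 2 * z 6 - u 6 * z 2) = 0 by
              linear_combination z 6 * h3 + z 2 * h7) with h | h
            · exact h
            · exact absurd h hd
          have ht : t = 0 := by
            rcases mul_eq_zero.mp (show t * (u 2 * z 6 - u 6 * z 2) = 0 by
              linear_combination -(u 6) * h3 - u 2 * h7) with h | h
            · exact h
            · exact absurd h hd
          exact ⟨hs, ht⟩
        have hsp : Submodule.span k {A u, A z} ≤ Submodule.map A V4 := by
          rw [Submodule.span_le]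
          intro y hy
          simp only [Set.mem_insert_iff, Set.mem_singleton_iff] at hy
          rcases hy with rfl | rfl
          · exact Submodule.mem_map_of_mem hu
          · exact Submodule.mem_map_of_mem hz
        have h2le := Submodule.finrank_mono hsp
        rw [show ({A u, A z} : Set (Fin 8 → k)) = Set.range ![A u, A z] by
          simp only [Matrix.range_cons, Matrix.range_empty, Set.union_empty,
            Set.singleton_union]] at h2le
        rw [finrank_span_eq_card hli, Fintype.card_fin] at h2le
        omega
    have hC2 : (∀ v ∈ V4, v 0 = 0) ∨ (∀ v ∈ V4, v 4 = 0) := by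
      by_contra hcon
      push_neg at hcon
      obtain ⟨⟨u, hu, hu0⟩, ⟨z, hz, hz4⟩⟩ := hcon
      have hqu := hQv u hu
      have hqz := hQv z hz
      have hpol := hPolv u hu z hz
      rcases hC1 with hh | hh
      · have h6u := hh u hu
        have h6z := hh z hz
        have hu4 : u 4 = 0 := by
          rcases mul_eq_zero.mp (show u 0 * u 4 = 0 by
            linear_combination hqu - u 2 * h6u) with h | h
          · exact absurd h hu0
          · exact h
        have hz0 : z 0 = 0 := by
          rcases mul_eq_zero.mp (show z 0 * z 4 = 0 by
            linear_combination hqz - z 2 * h6z) with h | h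
          · exact h
          · exact absurd h hz4
        rcases mul_eq_zero.mp (show u 0 * z 4 = 0 by
          linear_combination hpol - z 0 * hu4 - u 2 * h6z - z 2 * h6u) with h | h
        · exact hu0 h
        · exact hz4 h
      · have h2u := hh u hu
        have h2z := hh z hz
        have hu4 : u 4 = 0 := by
          rcases mul_eq_zero.mp (show u 0 * u 4 = 0 by
            linear_combination hqu - u 6 * h2u) with h | h
          · exact absurd h hu0
          · exact h
        have hz0 : z 0 = 0 := by
          rcases mul_eq_zero.mp (show z 0 * z 4 = 0 by
            linear_combination hqz - z 6 * h2z) with h | h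
          · exact h
          · exact absurd h hz4
        rcases mul_eq_zero.mp (show u 0 * z 4 = 0 by
          linear_combination hpol - z 0 * hu4 - u 6 * h2z - z 6 * h2u) with h | h
        · exact hu0 h
        · exact hz4 h
    rcases hC1 with h6c | h2c <;> rcases hC2 with h0c | h4c
    · -- v6 = 0 and v0 = 0 : V4 = span{e2,e3,e4,e7}, excluded by parity
      exfalso
      have hXle : V4 ≤ Submodule.span k {e8 k 3, e8 k 7, e8 k 2, e8 k 4} := by
        intro v hv
        obtain ⟨h1, h5⟩ := h15 v hv
        exact mem_span_quad (by funext j; fin_cases j <;>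
          simp [e8_apply, h1, h5, h6c v hv, h0c v hv])
      have hX : V4 = Submodule.span k {e8 k 3, e8 k 7, e8 k 2, e8 k 4} :=
        Submodule.eq_of_le_of_finrank_le hXle (by
          rw [finrank_span_e8_quad (by decide) (by decide) (by decide) (by decide) (by decide)
            (by decide), h4])
      have hIW : V4 ⊓ Submodule.span k {e8 k 3, e8 k 7, e8 k 0, e8 k 2} =
          Submodule.span k {e8 k 3, e8 k 7, e8 k 2} := by
        apply le_antisymm
        · intro v hv
          obtain ⟨hvV, hvW⟩ := Submodule.mem_inf.mp hv
          obtain ⟨h1, h5⟩ := h15 v hvV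
          have h4' : v 4 = 0 := coord_of_mem_span (by
            intro y hy
            simp only [Set.mem_insert_iff, Set.mem_singleton_iff] at hy
            rcases hy with rfl | rfl | rfl | rfl <;> simp [e8_apply]) hvW
          exact mem_span_triple (by funext j; fin_cases j <;>
            simp [e8_apply, h1, h5, h4', h6c v hvV, h0c v hvV])
        · refine le_inf (Submodule.span_le.mpr ?_) (Submodule.span_le.mpr ?_)
          · intro y hy
            simp only [Set.mem_insert_iff, Set.mem_singleton_iff] at hy
            rcases hy with rfl | rfl | rfl
            · exact he3
            · exact he7
            · rw [hX]; exact Submodule.subset_span (by simp)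
          · intro y hy
            simp only [Set.mem_insert_iff, Set.mem_singleton_iff] at hy
            rcases hy with rfl | rfl | rfl <;> exact Submodule.subset_span (by simp)
      rw [hIW, finrank_span_e8_triple (by decide) (by decide) (by decide)] at heven
      exact absurd heven (by decide)
    · -- v6 = 0 and v4 = 0 : V4 = W
      left
      have hle : V4 ≤ Submodule.span k {e8 k 3, e8 k 7, e8 k 0, e8 k 2} := by
        intro v hv
        obtain ⟨h1, h5⟩ := h15 v hv
        exact mem_span_quad (by funext j; fin_cases j <;>
          simp [e8_apply, h1, h5, h6c v hv, h4c v hv])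
      exact Submodule.eq_of_le_of_finrank_le hle (by
        rw [finrank_span_e8_quad (by decide) (by decide) (by decide) (by decide) (by decide)
          (by decide), h4])
    · -- v2 = 0 and v0 = 0 : V4 = W'
      right
      have hle : V4 ≤ Submodule.span k {e8 k 3, e8 k 7, e8 k 4, e8 k 6} := by
        intro v hv
        obtain ⟨h1, h5⟩ := h15 v hv
        exact mem_span_quad (by funext j; fin_cases j <;>
          simp [e8_apply, h1, h5, h2c v hv, h0c v hv])
      exact Submodule.eq_of_le_of_finrank_le hle (by
        rw [finrank_span_e8_quad (by decide) (by decide) (by decide) (by decide) (by decide)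
          (by decide), h4])
    · -- v2 = 0 and v4 = 0 : V4 = span{e0,e3,e6,e7}, excluded by parity
      exfalso
      have hXle : V4 ≤ Submodule.span k {e8 k 3, e8 k 7, e8 k 0, e8 k 6} := by
        intro v hv
        obtain ⟨h1, h5⟩ := h15 v hv
        exact mem_span_quad (by funext j; fin_cases j <;>
          simp [e8_apply, h1, h5, h2c v hv, h4c v hv])
      have hX : V4 = Submodule.span k {e8 k 3, e8 k 7, e8 k 0, e8 k 6} :=
        Submodule.eq_of_le_of_finrank_le hXle (by
          rw [finrank_span_e8_quad (by decide) (by decide) (by decide) (by decide) (by decide)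
            (by decide), h4])
      have hIW : V4 ⊓ Submodule.span k {e8 k 3, e8 k 7, e8 k 0, e8 k 2} =
          Submodule.span k {e8 k 3, e8 k 7, e8 k 0} := by
        apply le_antisymm
        · intro v hv
          obtain ⟨hvV, hvW⟩ := Submodule.mem_inf.mp hv
          obtain ⟨h1, h5⟩ := h15 v hvV
          have h6' : v 6 = 0 := coord_of_mem_span (by
            intro y hy
            simp only [Set.mem_insert_iff, Set.mem_singleton_iff] at hy
            rcases hy with rfl | rfl | rfl | rfl <;> simp [e8_apply]) hvW
          exact mem_span_triple (by funext j; fin_cases j <;>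
            simp [e8_apply, h1, h5, h6', h2c v hvV, h4c v hvV])
        · refine le_inf (Submodule.span_le.mpr ?_) (Submodule.span_le.mpr ?_)
          · intro y hy
            simp only [Set.mem_insert_iff, Set.mem_singleton_iff] at hy
            rcases hy with rfl | rfl | rfl
            · exact he3
            · exact he7
            · rw [hX]; exact Submodule.subset_span (by simp)
          · intro y hy
            simp only [Set.mem_insert_iff, Set.mem_singleton_iff] at hy
            rcases hy with rfl | rfl | rfl <;> exact Submodule.subset_span (by simp)
      rw [hIW, finrank_span_e8_triple (by decide) (by decide) (by decide)] at heven
      exact absurd heven (by decide)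
  · have hgenW : ∀ j : Fin 8, j ≠ 3 → j ≠ 7 → j ≠ 0 → j ≠ 2 →
        ∀ u ∈ ({e8 k 3, e8 k 7, e8 k 0, e8 k 2} : Set (Fin 8 → k)), u j = 0 := by
      intro j hj3 hj7 hj0 hj2 u hu
      simp only [Set.mem_insert_iff, Set.mem_singleton_iff] at hu
      rcases hu with rfl | rfl | rfl | rfl <;> simp [e8_apply, hj3, hj7, hj0, hj2]
    have hgenW' : ∀ j : Fin 8, j ≠ 3 → j ≠ 7 → j ≠ 4 → j ≠ 6 →
        ∀ u ∈ ({e8 k 3, e8 k 7, e8 k 4, e8 k 6} : Set (Fin 8 → k)), u j = 0 := by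
      intro j hj3 hj7 hj4 hj6 u hu
      simp only [Set.mem_insert_iff, Set.mem_singleton_iff] at hu
      rcases hu with rfl | rfl | rfl | rfl <;> simp [e8_apply, hj3, hj7, hj4, hj6]
    rintro (rfl | rfl)
    · refine ⟨finrank_span_e8_quad (by decide) (by decide) (by decide) (by decide) (by decide)
        (by decide), ?_, ?_, ?_, ?_⟩
      · intro v hv
        have h1 := coord_of_mem_span (hgenW 1 (by decide) (by decide) (by decide) (by decide)) hv
        have h4' := coord_of_mem_span (hgenW 4 (by decide) (by decide) (by decide) (by decide)) hv
        have h5 := coord_of_mem_span (hgenW 5 (by decide) (by decide) (by decide) (by decide)) hv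
        have h6 := coord_of_mem_span (hgenW 6 (by decide) (by decide) (by decide) (by decide)) hv
        rw [Qval Q hQ0 hQpolar, h1, h4', h5, h6]
        ring
      · exact Submodule.span_mono (by
          intro y hy
          simp only [Set.mem_insert_iff, Set.mem_singleton_iff] at hy ⊢
          tauto)
      · rw [Submodule.map_span]
        have himg : A '' {e8 k 3, e8 k 7, e8 k 0, e8 k 2} = {0, e8 k 3} := by
          rw [Set.image_insert_eq, Set.image_insert_eq, Set.image_insert_eq,
            Set.image_singleton, hA3, hA3', hA0, hA2]
          ext y
          simp only [Set.mem_insert_iff, Set.mem_singleton_iff]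
          tauto
        rw [himg, Submodule.span_insert_zero, finrank_span_singleton (by
          intro h
          have := congrFun h 3
          simp [e8_apply] at this)]
      · rw [inf_idem, finrank_span_e8_quad (by decide) (by decide) (by decide) (by decide)
          (by decide) (by decide)]
        decide
    · refine ⟨finrank_span_e8_quad (by decide) (by decide) (by decide) (by decide) (by decide)
        (by decide), ?_, ?_, ?_, ?_⟩
      · intro v hv
        have h0 := coord_of_mem_span (hgenW' 0 (by decide) (by decide) (by decide) (by decide)) hv
        have h1 := coord_of_mem_span (hgenW' 1 (by decide) (by decide) (by decide) (by decide)) hv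
        have h2 := coord_of_mem_span (hgenW' 2 (by decide) (by decide) (by decide) (by decide)) hv
        have h5 := coord_of_mem_span (hgenW' 5 (by decide) (by decide) (by decide) (by decide)) hv
        rw [Qval Q hQ0 hQpolar, h0, h1, h2, h5]
        ring
      · exact Submodule.span_mono (by
          intro y hy
          simp only [Set.mem_insert_iff, Set.mem_singleton_iff] at hy ⊢
          tauto)
      · rw [Submodule.map_span]
        have himg : A '' {e8 k 3, e8 k 7, e8 k 4, e8 k 6} = {0, -e8 k 7} := by
          rw [Set.image_insert_eq, Set.image_insert_eq, Set.image_insert_eq,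
            Set.image_singleton, hA3, hA3', hA0', hA2']
          ext y
          simp only [Set.mem_insert_iff, Set.mem_singleton_iff]
          tauto
        rw [himg, Submodule.span_insert_zero, finrank_span_singleton (by
          intro h
          have := congrFun h 7
          simp [e8_apply] at this)]
      · have hIW : Submodule.span k {e8 k 3, e8 k 7, e8 k 4, e8 k 6} ⊓
            Submodule.span k {e8 k 3, e8 k 7, e8 k 0, e8 k 2} =
            Submodule.span k {e8 k 3, e8 k 7} := by
          apply le_antisymm
          · intro v hv
            obtain ⟨hv1, hv2⟩ := Submodule.mem_inf.mp hv
            have h0 := coord_of_mem_span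
              (hgenW' 0 (by decide) (by decide) (by decide) (by decide)) hv1
            have h1 := coord_of_mem_span
              (hgenW' 1 (by decide) (by decide) (by decide) (by decide)) hv1
            have h2 := coord_of_mem_span
              (hgenW' 2 (by decide) (by decide) (by decide) (by decide)) hv1
            have h5 := coord_of_mem_span
              (hgenW' 5 (by decide) (by decide) (by decide) (by decide)) hv1
            have h4' := coord_of_mem_span
              (hgenW 4 (by decide) (by decide) (by decide) (by decide)) hv2
            have h6 := coord_of_mem_span
              (hgenW 6 (by decide) (by decide) (by decide) (by decide)) hv2
            exact mem_span_pair (by funext j; fin_cases j <;>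
              simp [e8_apply, h0, h1, h2, h4', h5, h6])
          · refine le_inf (Submodule.span_mono ?_) (Submodule.span_mono ?_) <;>
              (intro y hy
               simp only [Set.mem_insert_iff, Set.mem_singleton_iff] at hy ⊢
               tauto)
        rw [hIW, finrank_span_e8_pair (by decide)]
        decide
end

section
/- With V, Q, A as in the 8-dimensional setup, let X be the set of quadruples (V_1, V_2, V_4, Ṽ_4) where V_1 ⊆ V_2 ⊆ V_4 ∩ Ṽ_4, V_1 is an isotropic line, V_2 an isotropic plane, V_4 and Ṽ_4 maximal isotropic 4-spaces in the two distinct families, such that V_1 ⊆ I_2 ⊆ V_4 ∩ Ṽ_4 and A(V_4 ∩ Ṽ_4) ⊆ V_1. Then for every (V_1, V_2, V_4, Ṽ_4) ∈ X, all four subspaces are A-stable: A(V_1) ⊆ V_1, A(V_2) ⊆ V_2, A(V_4) ⊆ V_4, A(Ṽ_4) ⊆ Ṽ_4 (indeed A(V_1) = 0 and A(V_2) ⊆ V_1). -/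
/-- In the 8-dimensional setup of Lusztig §3.2: for every quadruple
`(V₁, V₂, V₄, Ṽ₄)` with `V₁ ⊆ V₂ ⊆ V₄ ∩ Ṽ₄`, `V₁` an isotropic line, `V₂` an isotropic
plane, `V₄, Ṽ₄` maximal isotropic 4-spaces in the two distinct families (expressed by
`dim(V₄ ∩ Ṽ₄)` odd), such that `V₁ ⊆ I₂ ⊆ V₄ ∩ Ṽ₄` and `A(V₄ ∩ Ṽ₄) ⊆ V₁`
(`I₂ = span(e₃,e₃')`), all four subspaces are `A`-stable; indeed `A(V₁) = 0` and
`A(V₂) ⊆ V₁`. -/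
theorem stmt15 {k : Type*} [Field k] [IsAlgClosed k]
    (Q : QuadraticForm k (Fin 8 → k))
    (hQ0 : ∀ i, Q (e8 k i) = 0)
    (hQpolar : ∀ i j, QuadraticMap.polar Q (e8 k i) (e8 k j) = gram8 k i j)
    (A : (Fin 8 → k) →ₗ[k] (Fin 8 → k)) (x x' : k) (hx : x + x' = 1)
    (hA0 : A (e8 k 0) = 0) (hA0' : A (e8 k 4) = 0)
    (hA1 : A (e8 k 1) = e8 k 2 + x • e8 k 3) (hA2 : A (e8 k 2) = e8 k 3)
    (hA3 : A (e8 k 3) = 0)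
    (hA1' : A (e8 k 5) = -e8 k 6 + x' • e8 k 7) (hA2' : A (e8 k 6) = -e8 k 7)
    (hA3' : A (e8 k 7) = 0)
    (V1 V2 V4 tV4 : Submodule k (Fin 8 → k))
    (hd1 : Module.finrank k V1 = 1) (hd2 : Module.finrank k V2 = 2)
    (hd4 : Module.finrank k V4 = 4) (hd4' : Module.finrank k tV4 = 4)
    (hi1 : ∀ v ∈ V1, Q v = 0) (hi2 : ∀ v ∈ V2, Q v = 0)
    (hi4 : ∀ v ∈ V4, Q v = 0) (hi4' : ∀ v ∈ tV4, Q v = 0)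
    (h12 : V1 ≤ V2) (h24 : V2 ≤ V4 ⊓ tV4)
    (hfam : ¬ Even (Module.finrank k ↥(V4 ⊓ tV4)))
    (hI2a : V1 ≤ Submodule.span k {e8 k 3, e8 k 7})
    (hI2b : Submodule.span k {e8 k 3, e8 k 7} ≤ V4 ⊓ tV4)
    (hA3cap : Submodule.map A (V4 ⊓ tV4) ≤ V1) :
    Submodule.map A V1 ≤ V1 ∧ Submodule.map A V2 ≤ V2 ∧
    Submodule.map A V4 ≤ V4 ∧ Submodule.map A tV4 ≤ tV4 ∧
    Submodule.map A V1 = ⊥ ∧ Submodule.map A V2 ≤ V1 := by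
  have hsum : ∀ u : Fin 8 → k, u = ∑ i, u i • e8 k i := by
    intro u
    funext j
    simp [e8, Finset.sum_apply, Pi.single_apply]
  have he3 : e8 k 3 ∈ Submodule.span k {e8 k 3, e8 k 7} :=
    Submodule.subset_span (by simp)
  have he7 : e8 k 7 ∈ Submodule.span k {e8 k 3, e8 k 7} :=
    Submodule.subset_span (by simp)
  -- A kills span{e3, e7}
  have hker : Submodule.span k {e8 k 3, e8 k 7} ≤ LinearMap.ker A := by
    rw [Submodule.span_le]
    rintro v (rfl | rfl) <;> simp [LinearMap.mem_ker, hA3, hA3']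
  -- A(V1) = ⊥
  have hv1bot : Submodule.map A V1 = ⊥ := by
    rw [eq_bot_iff]
    rintro w ⟨u, hu, rfl⟩
    simpa using LinearMap.mem_ker.mp (hker (hI2a hu))
  -- A(V2) ≤ V1
  have hv2 : Submodule.map A V2 ≤ V1 :=
    le_trans (Submodule.map_mono h24) hA3cap
  -- polar pairing computation
  have hcomp : ∀ (u : Fin 8 → k) (j : Fin 8),
      QuadraticMap.polar Q u (e8 k j) = ∑ i, u i * gram8 k i j := by
    intro u j
    have : QuadraticMap.polar Q u (e8 k j)
        = QuadraticMap.polar Q (∑ i, u i • e8 k i) (e8 k j) := by rw [← hsum]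
    rw [this]
    have hb : QuadraticMap.polar Q (∑ i, u i • e8 k i) (e8 k j)
        = Q.polarBilin (∑ i, u i • e8 k i) (e8 k j) := rfl
    rw [hb, map_sum]
    simp only [map_smul, LinearMap.sum_apply, LinearMap.smul_apply,
      QuadraticMap.polarBilin_apply_apply, smul_eq_mul]
    exact Finset.sum_congr rfl fun i _ => by rw [hQpolar]
  have hcol3 : ∀ i, gram8 k i (3 : Fin 8) = if i = 5 then 1 else 0 := by
    intro i; fin_cases i <;> rfl
  have hcol7 : ∀ i, gram8 k i (7 : Fin 8) = if i = 1 then 1 else 0 := by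
    intro i; fin_cases i <;> rfl
  -- isotropic subspaces have zero polar pairing
  have hpolW : ∀ (W : Submodule k (Fin 8 → k)), (∀ v ∈ W, Q v = 0) →
      ∀ v ∈ W, ∀ w ∈ W, QuadraticMap.polar Q v w = 0 := by
    intro W hW v hv w hw
    simp [QuadraticMap.polar, hW _ (W.add_mem hv hw), hW _ hv, hW _ hw]
  -- key : any isotropic W containing span{e3,e7} satisfies A(W) ≤ span{e3,e7}
  have key : ∀ (W : Submodule k (Fin 8 → k)), (∀ v ∈ W, Q v = 0) →
      Submodule.span k {e8 k 3, e8 k 7} ≤ W →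
      Submodule.map A W ≤ Submodule.span k {e8 k 3, e8 k 7} := by
    intro W hW hsp
    rintro w ⟨u, hu, rfl⟩
    have h5 : u 5 = 0 := by
      have := hpolW W hW u hu (e8 k 3) (hsp he3)
      rw [hcomp] at this
      simpa [hcol3, Fin.sum_univ_eight] using this
    have h1 : u 1 = 0 := by
      have := hpolW W hW u hu (e8 k 7) (hsp he7)
      rw [hcomp] at this
      simpa [hcol7, Fin.sum_univ_eight] using this
    have hAu : A u = u 2 • e8 k 3 + u 6 • (-e8 k 7) := by
      conv_lhs => rw [hsum u]
      rw [map_sum]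
      simp [Fin.sum_univ_eight, hA0, hA0', hA1, hA2, hA3, hA1', hA2', hA3', h1, h5]
    rw [hAu]
    exact Submodule.add_mem _ (Submodule.smul_mem _ _ he3)
      (Submodule.smul_mem _ _ (Submodule.neg_mem _ he7))
  have hv4 : Submodule.map A V4 ≤ V4 :=
    le_trans (key V4 hi4 (le_trans hI2b inf_le_left)) (le_trans hI2b inf_le_left)
  have hv4' : Submodule.map A tV4 ≤ tV4 :=
    le_trans (key tV4 hi4' (le_trans hI2b inf_le_right)) (le_trans hI2b inf_le_right)
  exact ⟨hv1bot ▸ bot_le, le_trans hv2 h12, hv4, hv4', hv1bot, hv2⟩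
end

section
/- Let G = GL(V) for a 6-dimensional vector space V over an algebraically closed field, u = 1 + A unipotent with A nilpotent of Jordan type (3,3), K_2 = ker A, K_4 = ker A^2. Let Z' = {V_5 : K_4 ⊆ V_5 ⊆ V, dim V_5 = 5} and for each V_5 ∈ Z' note A^2(V_5) is a line V_1 ⊆ K_2. Then the set Z = {(V_1,V_2,V_4,V_5) : dim V_i = i, V_1 ⊆ V_2, V_4 ⊆ V_5, V_1 ⊆ K_2, K_4 ⊆ V_5, A^2(V_5)=V_1, A(V_4)=V_2, V_2 ⊆ A(V_5) ⊆ V_4}, with the map (V_1,V_2,V_4,V_5) ↦ (A^2(V_5), V_5), fibres over Z' with each fibre isomorphic to P^1; more precisely, for fixed V_5 ∈ Z' the fibre is in bijection with the set of hyperplanes V_4 of V_5 containing A(V_5), which is the projective line P(V_5/A(V_5))* of the 2-dimensional quotient V_5/A(V_5). -/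
open Module

lemma aux_rank_nullity {k V : Type*} [Field k] [AddCommGroup V] [Module k V]
    [FiniteDimensional k V] (f : V →ₗ[k] V) (p : Submodule k V)
    (h : LinearMap.ker f ≤ p) :
    finrank k (Submodule.map f p) + finrank k (LinearMap.ker f) = finrank k p := by
  have h1 := LinearMap.finrank_range_add_finrank_ker (f.comp p.subtype)
  rw [LinearMap.range_comp, Submodule.range_subtype, LinearMap.ker_comp,
    (Submodule.comapSubtypeEquivOfLe h).finrank_eq] at h1
  simpa using h1

/-- Lusztig 3.22: with `A` nilpotent of Jordan type (3,3) on the 6-dimensional space `V`,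
`K₂ = ker A`, `K₄ = ker A²`, the variety
`Z = {(V₁,V₂,V₄,V₅) : V₁ ⊆ V₂, V₄ ⊆ V₅, V₁ ⊆ K₂, K₄ ⊆ V₅, A²(V₅) = V₁, A(V₄) = V₂,
V₂ ⊆ A(V₅) ⊆ V₄}` fibres over `Z' = {V₅ : K₄ ⊆ V₅ ⊆ V, dim V₅ = 5}` via
`(V₁,V₂,V₄,V₅) ↦ (A²(V₅), V₅)`, with each fibre in bijection (via `V₄`) with the set of
hyperplanes of `V₅` containing `A(V₅)` — the projective line of the 2-dimensional
quotient `V₅/A(V₅)`.  Moreover for `V₅ ∈ Z'`, `A²(V₅)` is a line contained in `K₂`. -/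
theorem stmt18 {k V : Type*} [Field k] [IsAlgClosed k] [AddCommGroup V] [Module k V]
    (hdim : finrank k V = 6) (A : V →ₗ[k] V) (h3 : A ^ 3 = 0)
    (hr1 : finrank k (LinearMap.range A) = 4)
    (hr2 : finrank k (LinearMap.range (A ^ 2)) = 2) :
    let K2 := LinearMap.ker A
    let K4 := LinearMap.ker (A ^ 2)
    let Z' : Set (Submodule k V) := {V5 | K4 ≤ V5 ∧ finrank k V5 = 5}
    let Z : Set (Submodule k V × Submodule k V × Submodule k V × Submodule k V) :=
      {t | finrank k t.1 = 1 ∧ finrank k t.2.1 = 2 ∧ finrank k t.2.2.1 = 4 ∧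
        finrank k t.2.2.2 = 5 ∧ t.1 ≤ t.2.1 ∧ t.2.2.1 ≤ t.2.2.2 ∧
        t.1 ≤ K2 ∧ K4 ≤ t.2.2.2 ∧
        Submodule.map (A ^ 2) t.2.2.2 = t.1 ∧ Submodule.map A t.2.2.1 = t.2.1 ∧
        t.2.1 ≤ Submodule.map A t.2.2.2 ∧ Submodule.map A t.2.2.2 ≤ t.2.2.1}
    (∀ V5 ∈ Z', finrank k (Submodule.map (A ^ 2) V5) = 1 ∧
      Submodule.map (A ^ 2) V5 ≤ K2) ∧
    (∀ t ∈ Z, Submodule.map (A ^ 2) t.2.2.2 = t.1 ∧ t.2.2.2 ∈ Z') ∧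
    ∀ V5 ∈ Z', Set.BijOn (fun t => t.2.2.1) {t ∈ Z | t.2.2.2 = V5}
      {V4 : Submodule k V | Submodule.map A V5 ≤ V4 ∧ V4 ≤ V5 ∧ finrank k V4 = 4} := by
  intro K2 K4 Z' Z
  have hFD : FiniteDimensional k V := FiniteDimensional.of_finrank_pos (by omega)
  have hK2 : finrank k (LinearMap.ker A) = 2 := by
    have := LinearMap.finrank_range_add_finrank_ker A; omega
  have hK4 : finrank k (LinearMap.ker (A ^ 2)) = 4 := by
    have := LinearMap.finrank_range_add_finrank_ker (A ^ 2); omega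
  have hK2K4 : LinearMap.ker A ≤ LinearMap.ker (A ^ 2) := by
    intro x hx
    simp only [LinearMap.mem_ker] at *
    rw [pow_two, Module.End.mul_apply, hx, map_zero]
  -- map A² p = A (A p)
  have hsq : ∀ p : Submodule k V, Submodule.map (A ^ 2) p
      = Submodule.map A (Submodule.map A p) := by
    intro p
    rw [pow_two, Module.End.mul_eq_comp, Submodule.map_comp]
  -- A² p ≤ K2
  have hA2K2 : ∀ p : Submodule k V, Submodule.map (A ^ 2) p ≤ LinearMap.ker A := by
    rintro p x ⟨y, -, rfl⟩
    have : (A ^ 3) y = 0 := by rw [h3]; rfl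
    simpa [LinearMap.mem_ker, pow_succ, Module.End.mul_apply] using this
  -- A(K4) = K2
  have hAK4 : Submodule.map A (LinearMap.ker (A ^ 2)) = LinearMap.ker A := by
    have hle : Submodule.map A (LinearMap.ker (A ^ 2)) ≤ LinearMap.ker A := by
      rintro x ⟨y, hy, rfl⟩
      simpa [LinearMap.mem_ker, pow_two, Module.End.mul_apply] using hy
    have := aux_rank_nullity A (LinearMap.ker (A ^ 2)) hK2K4
    exact Submodule.eq_of_le_of_finrank_le hle (by omega)
  -- dimension facts for V5 ∈ Z'
  have key : ∀ V5 ∈ Z', finrank k (Submodule.map (A ^ 2) V5) = 1 ∧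
      finrank k (Submodule.map A V5) = 3 ∧ LinearMap.ker A ≤ Submodule.map A V5 := by
    intro V5 ⟨hK4V5, h5⟩
    have hK4V5' : LinearMap.ker (A ^ 2) ≤ V5 := hK4V5
    have h1 := aux_rank_nullity (A ^ 2) V5 hK4V5'
    have h2 := aux_rank_nullity A V5 (le_trans hK2K4 hK4V5')
    refine ⟨by omega, by omega, ?_⟩
    rw [← hAK4]
    exact Submodule.map_mono hK4V5'
  refine ⟨fun V5 h => ⟨(key V5 h).1, hA2K2 V5⟩, fun t ht => ⟨ht.2.2.2.2.2.2.2.2.1,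
    ht.2.2.2.2.2.2.2.1, ht.2.2.2.1⟩, ?_⟩
  intro V5 hV5
  obtain ⟨hk1, hk3, hk2le⟩ := key V5 hV5
  refine ⟨?_, ?_, ?_⟩
  · -- MapsTo
    rintro t ⟨ht, ht5⟩
    subst ht5
    exact ⟨ht.2.2.2.2.2.2.2.2.2.2.2, ht.2.2.2.2.2.1, ht.2.2.1⟩
  · -- InjOn
    rintro ⟨a1, b1, c1, d1⟩ ⟨h1, e1⟩ ⟨a2, b2, c2, d2⟩ ⟨h2, e2⟩ hc
    simp only at hc e1 e2 ⊢
    subst hc; subst e1; subst e2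
    simp only [Z, Set.mem_setOf_eq] at h1 h2
    have ha : a1 = a2 := by rw [← h1.2.2.2.2.2.2.2.2.1, ← h2.2.2.2.2.2.2.2.2.1]
    have hb : b1 = b2 := by rw [← h1.2.2.2.2.2.2.2.2.2.1, ← h2.2.2.2.2.2.2.2.2.2.1]
    rw [ha, hb]
  · -- SurjOn
    rintro V4 ⟨hAV5, hle, hd4⟩
    have hK2V4 : LinearMap.ker A ≤ V4 := le_trans hk2le hAV5
    have hV2 : finrank k (Submodule.map A V4) = 2 := by
      have := aux_rank_nullity A V4 hK2V4; omega
    refine ⟨(Submodule.map (A ^ 2) V5, Submodule.map A V4, V4, V5),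
      ⟨⟨hk1, hV2, hd4, hV5.2, ?_, hle, hA2K2 V5, hV5.1, rfl, rfl,
        Submodule.map_mono hle, hAV5⟩, rfl⟩, rfl⟩
    rw [hsq]
    exact Submodule.map_mono hAV5
end

section
/- Let V be a 6-dimensional vector space over an algebraically closed field, A nilpotent of Jordan type (3,3), K_2 = ker A, K_4 = ker A^2. Let T'_24 = {complete flags (V_1,...,V_5) : V_1 ⊆ K_2, K_4 ⊆ V_5, A(V_5) = V_3, A(V_3) = V_1, A(V_4) = V_2} and T'_15 = {complete flags (V_1,...,V_5) : V_2 = K_2, V_4 = K_4, A^2(V_5) = V_1}. Then T'_24 ∩ T'_15 = {(V_1,...,V_5) : A(V_5) = V_3, A(V_3) = V_1, V_2 = K_2, V_4 = K_4}, and the map sending such a flag to V_5 is a bijection from T'_24 ∩ T'_15 onto the set {V_5 : K_4 ⊆ V_5 ⊆ V, dim V_5 = 5}, a projective line P(V/K_4). -/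
open Module

private lemma dim_map_aux {k V : Type*} [Field k] [AddCommGroup V] [Module k V]
    [FiniteDimensional k V] (A : V →ₗ[k] V) (W : Submodule k V) :
    finrank k (Submodule.map A W) + finrank k ↥(LinearMap.ker A ⊓ W) = finrank k W := by
  have h := LinearMap.finrank_range_add_finrank_ker (A.domRestrict W)
  rw [LinearMap.range_domRestrict, LinearMap.ker_domRestrict] at h
  have e : Submodule.comap W.subtype (LinearMap.ker A)
      = Submodule.comap W.subtype (LinearMap.ker A ⊓ W) := by
    rw [Submodule.comap_inf, Submodule.comap_subtype_self, inf_top_eq]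
  rw [e] at h
  rwa [(Submodule.comapSubtypeEquivOfLe
    (inf_le_right : LinearMap.ker A ⊓ W ≤ W)).finrank_eq] at h

/-- Lusztig 3.23: with `A` nilpotent of Jordan type (3,3) on the 6-dimensional space `V`,
`K₂ = ker A`, `K₄ = ker A²`, the intersection `T'₂₄ ∩ T'₁₅` of the two subvarieties of
the complete flag variety is
`{(V₁,…,V₅) : A(V₅) = V₃, A(V₃) = V₁, V₂ = K₂, V₄ = K₄}`, and the map sending a flag to
`V₅` is a bijection from `T'₂₄ ∩ T'₁₅` onto `{V₅ : K₄ ⊆ V₅ ⊆ V, dim V₅ = 5}`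
(the projective line `P(V/K₄)`). -/
theorem stmt19 {k V : Type*} [Field k] [IsAlgClosed k] [AddCommGroup V] [Module k V]
    (hdim : finrank k V = 6) (A : V →ₗ[k] V) (h3 : A ^ 3 = 0)
    (hr1 : finrank k (LinearMap.range A) = 4)
    (hr2 : finrank k (LinearMap.range (A ^ 2)) = 2) :
    let K2 := LinearMap.ker A
    let K4 := LinearMap.ker (A ^ 2)
    let Flag : Submodule k V × Submodule k V × Submodule k V × Submodule k V ×
        Submodule k V → Prop := fun t =>
      finrank k t.1 = 1 ∧ finrank k t.2.1 = 2 ∧ finrank k t.2.2.1 = 3 ∧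
      finrank k t.2.2.2.1 = 4 ∧ finrank k t.2.2.2.2 = 5 ∧
      t.1 ≤ t.2.1 ∧ t.2.1 ≤ t.2.2.1 ∧ t.2.2.1 ≤ t.2.2.2.1 ∧ t.2.2.2.1 ≤ t.2.2.2.2
    let T24 : Set (Submodule k V × Submodule k V × Submodule k V × Submodule k V ×
        Submodule k V) :=
      {t | Flag t ∧ t.1 ≤ K2 ∧ K4 ≤ t.2.2.2.2 ∧
        Submodule.map A t.2.2.2.2 = t.2.2.1 ∧ Submodule.map A t.2.2.1 = t.1 ∧
        Submodule.map A t.2.2.2.1 = t.2.1}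
    let T15 : Set (Submodule k V × Submodule k V × Submodule k V × Submodule k V ×
        Submodule k V) :=
      {t | Flag t ∧ t.2.1 = K2 ∧ t.2.2.2.1 = K4 ∧
        Submodule.map (A ^ 2) t.2.2.2.2 = t.1}
    T24 ∩ T15 =
      {t | Flag t ∧ Submodule.map A t.2.2.2.2 = t.2.2.1 ∧
        Submodule.map A t.2.2.1 = t.1 ∧ t.2.1 = K2 ∧ t.2.2.2.1 = K4} ∧
    Set.BijOn (fun t => t.2.2.2.2) (T24 ∩ T15)
      {V5 : Submodule k V | K4 ≤ V5 ∧ finrank k V5 = 5} := by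
  intro K2 K4 Flag T24 T15
  haveI : FiniteDimensional k V :=
    FiniteDimensional.of_finrank_pos (by rw [hdim]; norm_num)
  have hK2d : LinearMap.ker A = K2 := rfl
  have hK4d : LinearMap.ker (A ^ 2) = K4 := rfl
  have hK2 : finrank k K2 = 2 := by
    have h := LinearMap.finrank_range_add_finrank_ker A
    rw [hr1, hdim, hK2d] at h; omega
  have hK4 : finrank k K4 = 4 := by
    have h := LinearMap.finrank_range_add_finrank_ker (A ^ 2)
    rw [hr2, hdim, hK4d] at h; omega
  have h3' : ∀ x, A (A (A x)) = 0 := by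
    intro x
    have := LinearMap.ext_iff.mp h3 x
    simpa [pow_succ, Module.End.mul_apply] using this
  have hK2K4 : K2 ≤ K4 := by
    intro x hx
    have hx' : A x = 0 := hx
    show (A ^ 2) x = 0
    simp [pow_two, Module.End.mul_apply, hx']
  have hmapK4 : ∀ W : Submodule k V, Submodule.map A W ≤ K4 := by
    intro W x hx
    obtain ⟨w, -, rfl⟩ := hx
    show (A ^ 2) (A w) = 0
    simp [pow_two, Module.End.mul_apply, h3' w]
  have hAK4le : Submodule.map A K4 ≤ K2 := by
    intro x hx
    obtain ⟨w, hw, rfl⟩ := hx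
    have hw' : (A ^ 2) w = 0 := hw
    show A (A w) = 0
    simpa [pow_two, Module.End.mul_apply] using hw'
  have hrange2 : Submodule.map A (LinearMap.range A) = LinearMap.range (A ^ 2) := by
    rw [pow_two, Module.End.mul_eq_comp, LinearMap.range_comp]
  have hK2range : K2 ≤ LinearMap.range A := by
    have h := dim_map_aux A (LinearMap.range A)
    rw [hrange2, hr2, hr1, hK2d] at h
    have heq : K2 ⊓ LinearMap.range A = K2 :=
      Submodule.eq_of_le_of_finrank_le inf_le_left (by rw [hK2]; omega)
    exact inf_eq_left.mp heq
  have hAK4 : Submodule.map A K4 = K2 := by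
    have h := dim_map_aux A K4
    have hi : (LinearMap.ker A ⊓ K4 : Submodule k V) = K2 := inf_eq_left.mpr hK2K4
    rw [hi, hK2, hK4] at h
    exact Submodule.eq_of_le_of_finrank_le hAK4le (by rw [hK2]; omega)
  have key : ∀ W : Submodule k V, K4 ≤ W → finrank k W = 5 →
      finrank k (Submodule.map A W) = 3 ∧
      finrank k (Submodule.map A (Submodule.map A W)) = 1 ∧
      K2 ≤ Submodule.map A W ∧
      Submodule.map A (Submodule.map A W) ≤ K2 := by
    intro W hW hW5
    have hK2W : K2 ≤ W := le_trans hK2K4 hW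
    have h1 := dim_map_aux A W
    have hi1 : (LinearMap.ker A ⊓ W : Submodule k V) = K2 := inf_eq_left.mpr hK2W
    rw [hi1, hK2, hW5] at h1
    have hd3 : finrank k (Submodule.map A W) = 3 := by omega
    have hK2V3 : K2 ≤ Submodule.map A W := by
      rw [← hAK4]; exact Submodule.map_mono hW
    have h2 := dim_map_aux A (Submodule.map A W)
    have hi2 : (LinearMap.ker A ⊓ Submodule.map A W : Submodule k V) = K2 :=
      inf_eq_left.mpr hK2V3
    rw [hi2, hK2, hd3] at h2
    have hd1 : finrank k (Submodule.map A (Submodule.map A W)) = 1 := by omega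
    refine ⟨hd3, hd1, hK2V3, ?_⟩
    rw [← hAK4]
    exact Submodule.map_mono (hmapK4 W)
  have hmem : ∀ t, Flag t → Submodule.map A t.2.2.2.2 = t.2.2.1 →
      Submodule.map A t.2.2.1 = t.1 → t.2.1 = K2 → t.2.2.2.1 = K4 → t ∈ T24 ∩ T15 := by
    intro t hF h53 h31 h2 h4
    obtain ⟨d1, d2, d3, d4, d5, l12, l23, l34, l45⟩ := hF
    refine ⟨⟨⟨d1, d2, d3, d4, d5, l12, l23, l34, l45⟩, ?_, ?_, h53, h31, ?_⟩,
      ⟨d1, d2, d3, d4, d5, l12, l23, l34, l45⟩, h2, h4, ?_⟩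
    · rw [← h2]; exact l12
    · rw [← h4]; exact l45
    · rw [h4, hAK4, h2]
    · rw [← h31, ← h53, pow_two, Module.End.mul_eq_comp, Submodule.map_comp]
  constructor
  · ext t
    constructor
    · rintro ⟨⟨hF, -, -, h53, h31, -⟩, -, h2, h4, -⟩
      exact ⟨hF, h53, h31, h2, h4⟩
    · rintro ⟨hF, h53, h31, h2, h4⟩
      exact hmem t hF h53 h31 h2 h4
  · refine ⟨?_, ?_, ?_⟩
    · rintro t ⟨⟨hF, -, hle, -⟩, -⟩
      exact ⟨hle, hF.2.2.2.2.1⟩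
    · rintro t ⟨⟨-, -, -, h53, h31, -⟩, -, h2, h4, -⟩
        t' ⟨⟨-, -, -, h53', h31', -⟩, -, h2', h4', -⟩ h5eq
      have e5 : t.2.2.2.2 = t'.2.2.2.2 := h5eq
      have e3 : t.2.2.1 = t'.2.2.1 := by rw [← h53, ← h53', e5]
      have e1 : t.1 = t'.1 := by rw [← h31, ← h31', e3]
      have e2 : t.2.1 = t'.2.1 := by rw [h2, h2']
      have e4 : t.2.2.2.1 = t'.2.2.2.1 := by rw [h4, h4']
      exact Prod.ext e1 (Prod.ext e2 (Prod.ext e3 (Prod.ext e4 e5)))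
    · rintro W ⟨hK4W, hW5⟩
      obtain ⟨hd3, hd1, hK2V3, hV1K2⟩ := key W hK4W hW5
      refine ⟨(Submodule.map A (Submodule.map A W), K2, Submodule.map A W, K4, W),
        hmem _ ⟨hd1, hK2, hd3, hK4, hW5, ?_, hK2V3, hmapK4 W, hK4W⟩ rfl rfl rfl rfl, rfl⟩
      exact hV1K2
end
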